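/- arXiv:1006.2940 — 3 statements merged into one kernel-verified Lean document; each statement's English description precedes it below -/
import Mathlib

section
/- Adding boundary constraints to isotonic regression yields the Winsorized solution: let y ∈ ℝⁿ and let f* be the (unique) isotonic regression of y, i.e. the minimizer of ∑ᵢ(yᵢ - fᵢ)² over monotone increasing f. Assume f* is a regressogram: there is a partition of {1,...,n} into consecutive blocks on which f* is constant and equals the block mean of y. Then for any A ≤ B, the Winsorized vector f*_{>A,<B} with coordinates max(A, min(B, f*ᵢ)) is the unique minimizer of ∑ᵢ(yᵢ - fᵢ)² over monotone increasing f satisfying A ≤ fᵢ ≤ B for all i. -/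
/-! Winsorizing is the projection onto the monotone vectors with values in `[A, B]`: the
residual `y - g` of the clipped vector `g` has nonpositive inner product with `f - g` for every
feasible `f`. Splitting `y - g = (y - fs) + (fs - g)`, the first part is nonpositive against
every monotone `f` because `fs` is optimal along the rays `fs + t f`, and orthogonal to `g`
because `g` is a function of `fs` and the residuals sum to zero on its level sets; the second
part is nonpositive coordinatewise, since clipping moves `fs i` towards every point of
`[A, B]`. -/

open Finset

section SumsOfSquares

variable {ι : Type*} [Fintype ι]

theorem sum_sub_sq_eq (y f g : ι → ℝ) :
    ∑ i, (y i - f i) ^ 2 =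
      ∑ i, (y i - g i) ^ 2 - 2 * ∑ i, (y i - g i) * (f i - g i) + ∑ i, (f i - g i) ^ 2 := by
  rw [mul_sum, ← sum_sub_distrib, ← sum_add_distrib]
  exact sum_congr rfl fun i _ => by ring

theorem sum_sub_sq_add_le_of_sum_mul_nonpos {y f g : ι → ℝ}
    (h : ∑ i, (y i - g i) * (f i - g i) ≤ 0) :
    ∑ i, (y i - g i) ^ 2 + ∑ i, (f i - g i) ^ 2 ≤ ∑ i, (y i - f i) ^ 2 := by
  rw [sum_sub_sq_eq y f g]
  linarith

theorem eq_of_sum_sub_sq_nonpos {f g : ι → ℝ} (h : ∑ i, (f i - g i) ^ 2 ≤ 0) : f = g := by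
  have hzero := (sum_eq_zero_iff_of_nonneg fun i _ => sq_nonneg (f i - g i)).mp
    (le_antisymm h (sum_nonneg fun i _ => sq_nonneg _))
  funext i
  simpa [sub_eq_zero] using hzero i (mem_univ i)

theorem sum_sub_mul_nonpos_of_min_along_ray {y x v : ι → ℝ}
    (hmin : ∀ t : ℝ, 0 < t → ∑ i, (y i - x i) ^ 2 ≤ ∑ i, (y i - (x i + t * v i)) ^ 2) :
    ∑ i, (y i - x i) * v i ≤ 0 := by
  set S := ∑ i, (y i - x i) * v i
  set Q := ∑ i, v i ^ 2
  have hQ : 0 ≤ Q := sum_nonneg fun i _ => sq_nonneg _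
  have hray : ∀ t : ℝ, 0 < t → 2 * S ≤ t * Q := by
    intro t ht
    have h := hmin t ht
    rw [sum_sub_sq_eq y (fun i => x i + t * v i) x] at h
    simp only [add_sub_cancel_left, mul_pow, ← mul_sum, mul_left_comm _ t] at h
    exact le_of_mul_le_mul_left (by linarith) ht
  by_contra! hS
  have h := hray (S / (Q + 1)) (by positivity)
  have : S / (Q + 1) * Q ≤ S := by
    rw [div_mul_eq_mul_div, div_le_iff₀ (by positivity)]
    nlinarith
  linarith

theorem sum_mul_comp_eq_zero_of_sum_fiber_eq_zero {α : Type*} [DecidableEq α]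
    {r : ι → ℝ} {x : ι → α}
    (hr : ∀ i, ∑ j ∈ univ.filter (fun j => x j = x i), r j = 0) (φ : α → ℝ) :
    ∑ i, r i * φ (x i) = 0 := by
  refine (sum_image' (f := fun _ => (0 : ℝ)) (g := x) _ fun i _ => ?_).symm.trans
    sum_const_zero
  rw [sum_congr rfl fun j hj => congrArg (r j * φ ·) (mem_filter.mp hj).2, ← sum_mul, hr i,
    zero_mul]

end SumsOfSquares

theorem sub_max_min_mul_sub_max_min_nonpos {A B x a : ℝ} (hA : A ≤ a) (hB : a ≤ B) :
    (x - max A (min B x)) * (a - max A (min B x)) ≤ 0 := by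
  rcases le_total x B with hxB | hxB
  · rw [min_eq_right hxB]
    rcases le_total A x with hAx | hAx
    · simp [max_eq_right hAx]
    · rw [max_eq_left hAx]
      nlinarith
  · rw [min_eq_left hxB, max_eq_right (hA.trans hB)]
    nlinarith

theorem winsorized_solves_boundary_constrained_isotonic_general (n : ℕ)
    (y fs : Fin n → ℝ) (hmono : Monotone fs)
    (hmin : ∀ f : Fin n → ℝ, Monotone f →
      ∑ i, (y i - fs i) ^ 2 ≤ ∑ i, (y i - f i) ^ 2)
    (hreg : ∀ i : Fin n,
      ∑ j ∈ Finset.univ.filter (fun j => fs j = fs i), (y j - fs j) = 0)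
    (A B : ℝ) (hAB : A ≤ B) :
    let g : Fin n → ℝ := fun i => max A (min B (fs i))
    (Monotone g ∧ (∀ i, A ≤ g i ∧ g i ≤ B)) ∧
    (∀ f : Fin n → ℝ, Monotone f → (∀ i, A ≤ f i ∧ f i ≤ B) →
      ∑ i, (y i - g i) ^ 2 ≤ ∑ i, (y i - f i) ^ 2) ∧
    (∀ f : Fin n → ℝ, Monotone f → (∀ i, A ≤ f i ∧ f i ≤ B) →
      (∀ f' : Fin n → ℝ, Monotone f' → (∀ i, A ≤ f' i ∧ f' i ≤ B) →
        ∑ i, (y i - f i) ^ 2 ≤ ∑ i, (y i - f' i) ^ 2) → f = g) := by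
  intro g
  have hg_mono : Monotone g := monotone_const.max (monotone_const.min hmono)
  have hg_mem : ∀ i, A ≤ g i ∧ g i ≤ B := fun i =>
    ⟨le_max_left _ _, max_le hAB (min_le_left _ _)⟩
  have hproj : ∀ f : Fin n → ℝ, Monotone f → (∀ i, A ≤ f i ∧ f i ≤ B) →
      ∑ i, (y i - g i) * (f i - g i) ≤ 0 := by
    intro f hf hf_mem
    have hray := sum_sub_mul_nonpos_of_min_along_ray fun t ht =>
      hmin _ (hmono.add (hf.const_mul ht.le))
    have horth := sum_mul_comp_eq_zero_of_sum_fiber_eq_zero hreg fun v => max A (min B v)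
    have hclip : ∑ i, (fs i - g i) * (f i - g i) ≤ 0 :=
      sum_nonpos fun i _ => sub_max_min_mul_sub_max_min_nonpos (hf_mem i).1 (hf_mem i).2
    calc ∑ i, (y i - g i) * (f i - g i)
        = ∑ i, (y i - fs i) * f i - ∑ i, (y i - fs i) * g i
            + ∑ i, (fs i - g i) * (f i - g i) := by
          rw [← sum_sub_distrib, ← sum_add_distrib]
          exact sum_congr rfl fun i _ => by ring
      _ ≤ 0 := by linarith
  refine ⟨⟨hg_mono, hg_mem⟩, fun f hf hf_mem => ?_, fun f hf hf_mem hf_min => ?_⟩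
  · have := sum_sub_sq_add_le_of_sum_mul_nonpos (hproj f hf hf_mem)
    have : 0 ≤ ∑ i, (f i - g i) ^ 2 := sum_nonneg fun i _ => sq_nonneg _
    linarith
  · refine eq_of_sum_sub_sq_nonpos ?_
    have := sum_sub_sq_add_le_of_sum_mul_nonpos (hproj f hf hf_mem)
    linarith [hf_min g hg_mono hg_mem]

/-- Adding boundary constraints to isotonic regression yields the
Winsorized solution. Let `fs` be the isotonic regression of `y` (a monotone
minimizer of the residual sum of squares over monotone vectors), with the
regressogram property: on each level set of `fs`, the residuals of `y` sum to
zero. Then for any `A ≤ B`, the Winsorized vector `g i = max A (min B (fs i))`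
is the unique minimizer of `∑ (yᵢ - fᵢ)²` over monotone `f` with
`A ≤ fᵢ ≤ B` for all `i`. -/
theorem winsorized_solves_boundary_constrained_isotonic (n : ℕ) (hn : 1 ≤ n)
    (y fs : Fin n → ℝ) (hmono : Monotone fs)
    (hmin : ∀ f : Fin n → ℝ, Monotone f →
      ∑ i, (y i - fs i) ^ 2 ≤ ∑ i, (y i - f i) ^ 2)
    (hreg : ∀ i : Fin n,
      ∑ j ∈ Finset.univ.filter (fun j => fs j = fs i), (y j - fs j) = 0)
    (A B : ℝ) (hAB : A ≤ B) :
    let g : Fin n → ℝ := fun i => max A (min B (fs i))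
    (Monotone g ∧ (∀ i, A ≤ g i ∧ g i ≤ B)) ∧
    (∀ f : Fin n → ℝ, Monotone f → (∀ i, A ≤ f i ∧ f i ≤ B) →
      ∑ i, (y i - g i) ^ 2 ≤ ∑ i, (y i - f i) ^ 2) ∧
    (∀ f : Fin n → ℝ, Monotone f → (∀ i, A ≤ f i ∧ f i ≤ B) →
      (∀ f' : Fin n → ℝ, Monotone f' → (∀ i, A ≤ f' i ∧ f' i ≤ B) →
        ∑ i, (y i - f i) ^ 2 ≤ ∑ i, (y i - f' i) ^ 2) → f = g) :=
  winsorized_solves_boundary_constrained_isotonic_general n y fs hmono hmin hreg A B hAB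
end

section
/- Residual sum of squares decomposition under Winsorization: let y ∈ ℝⁿ and let f* be the isotonic regression of y with the regressogram property (on each constant block of f*, the value of f* equals the mean of y over that block). Then for any A ≤ B, letting g = max(A, min(B, f*)) coordinatewise, ∑ᵢ(yᵢ - gᵢ)² = ∑ᵢ(yᵢ - f*ᵢ)² + ∑ᵢ (A - f*ᵢ)₊² + ∑ᵢ (f*ᵢ - B)₊², where x₊ = max(x, 0). -/
/-! The Winsorized fit is `φ ∘ f*` with `φ v = max A (min B v)`, so it is constant on the blocks
of `f*`. Residuals of `f*` sum to zero on each block, hence are orthogonal to every function of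
`f*`, and Pythagoras splits the residual sum of squares of `φ ∘ f*` into that of `f*` plus
`∑ (f*ᵢ - φ f*ᵢ)²`. Finally `v - φ v = (v - B)₊ - (A - v)₊`, and for `A ≤ B` at most one of
these two parts is nonzero. -/

open Finset

theorem sum_mul_comp_eq_zero_of_sum_fiber_eq_zero_s6 {ι β R : Type*} [Fintype ι] [DecidableEq β]
    [NonUnitalNonAssocSemiring R] (r : ι → R) (f : ι → β)
    (hr : ∀ i, ∑ j with f j = f i, r j = 0) (c : β → R) :
    ∑ i, r i * c (f i) = 0 := by
  rw [← sum_fiberwise_of_maps_to (g := f) (t := univ.image f)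
    fun i _ => mem_image_of_mem f (mem_univ i)]
  refine sum_eq_zero fun b hb => ?_
  obtain ⟨i, -, rfl⟩ := mem_image.mp hb
  calc ∑ j with f j = f i, r j * c (f j)
      = ∑ j with f j = f i, r j * c (f i) := sum_congr rfl fun j hj => by rw [(mem_filter.mp hj).2]
    _ = 0 := by rw [← sum_mul, hr i, zero_mul]

theorem sum_sq_sub_comp_eq_of_sum_fiber_eq_zero {ι : Type*} [Fintype ι] (y f : ι → ℝ)
    (hf : ∀ i, ∑ j with f j = f i, (y j - f j) = 0) (φ : ℝ → ℝ) :
    ∑ i, (y i - φ (f i)) ^ 2 = ∑ i, (y i - f i) ^ 2 + ∑ i, (f i - φ (f i)) ^ 2 := by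
  have hcross : ∑ i, (y i - f i) * (f i - φ (f i)) = 0 :=
    sum_mul_comp_eq_zero_of_sum_fiber_eq_zero_s6 (fun i => y i - f i) f hf fun v => v - φ v
  calc ∑ i, (y i - φ (f i)) ^ 2
      = ∑ i, ((y i - f i) ^ 2 + (f i - φ (f i)) ^ 2 + 2 * ((y i - f i) * (f i - φ (f i)))) :=
        sum_congr rfl fun i _ => by ring
    _ = ∑ i, (y i - f i) ^ 2 + ∑ i, (f i - φ (f i)) ^ 2 := by
        rw [sum_add_distrib, sum_add_distrib, ← mul_sum, hcross, mul_zero, add_zero]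

theorem sq_sub_max_min_eq {A B : ℝ} (hAB : A ≤ B) (v : ℝ) :
    (v - max A (min B v)) ^ 2 = max (A - v) 0 ^ 2 + max (v - B) 0 ^ 2 := by
  rcases le_total v A with hvA | hAv
  · rw [min_eq_right (hvA.trans hAB), max_eq_left hvA, max_eq_left (by linarith),
      max_eq_right (by linarith)]
    ring
  rcases le_total v B with hvB | hBv
  · rw [min_eq_right hvB, max_eq_right hAv, max_eq_right (by linarith),
      max_eq_right (by linarith)]
    ring
  · rw [min_eq_left hBv, max_eq_right hAB, max_eq_right (by linarith),
      max_eq_left (by linarith)]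
    ring

theorem rss_decomposition_winsorization_general (n : ℕ)
    (y fs : Fin n → ℝ)
    (hreg : ∀ i : Fin n,
      ∑ j ∈ Finset.univ.filter (fun j => fs j = fs i), (y j - fs j) = 0)
    (A B : ℝ) (hAB : A ≤ B) :
    ∑ i, (y i - max A (min B (fs i))) ^ 2
      = ∑ i, (y i - fs i) ^ 2
        + ∑ i, (max (A - fs i) 0) ^ 2
        + ∑ i, (max (fs i - B) 0) ^ 2 := by
  rw [sum_sq_sub_comp_eq_of_sum_fiber_eq_zero y fs hreg fun v => max A (min B v)]
  simp only [sq_sub_max_min_eq hAB, sum_add_distrib, add_assoc]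

/-- Residual sum of squares decomposition under Winsorization.
If `fs` is the isotonic regression of `y` with the regressogram property
(residuals of `y` sum to zero on each level set of `fs`), then for `A ≤ B`,
with `g = max A (min B fs)` coordinatewise,
`∑ (yᵢ - gᵢ)² = ∑ (yᵢ - fsᵢ)² + ∑ (A - fsᵢ)₊² + ∑ (fsᵢ - B)₊²`. -/
theorem rss_decomposition_winsorization (n : ℕ) (hn : 1 ≤ n)
    (y fs : Fin n → ℝ) (hmono : Monotone fs)
    (hmin : ∀ f : Fin n → ℝ, Monotone f →
      ∑ i, (y i - fs i) ^ 2 ≤ ∑ i, (y i - f i) ^ 2)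
    (hreg : ∀ i : Fin n,
      ∑ j ∈ Finset.univ.filter (fun j => fs j = fs i), (y j - fs j) = 0)
    (A B : ℝ) (hAB : A ≤ B) :
    ∑ i, (y i - max A (min B (fs i))) ^ 2
      = ∑ i, (y i - fs i) ^ 2
        + ∑ i, (max (A - fs i) 0) ^ 2
        + ∑ i, (max (fs i - B) 0) ^ 2 :=
  rss_decomposition_winsorization_general n y fs hreg A B hAB
end

section
/- Zero-fit threshold bound (Corollary): let y ∈ ℝⁿ with mean ȳ, and let f* be the isotonic regression of y (with respect to a covariate ordering given by a permutation π putting the covariate in ascending order). Then (1/2)∑ᵢ |f*ᵢ - ȳ| ≤ max_{1≤m≤n} |∑_{i=1}^m (y_{π(i)} - ȳ)|. Hence if λ ≥ max_m |∑_{i=1}^m (y_{π(i)} - ȳ)|, then 2λ ≥ ∑ᵢ|f*ᵢ - ȳ| and the univariate LISO solution is the constant ȳ. -/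
/-!
Since `f*` equals the block mean of `y ∘ π` on each of its blocks, `∑ (f*ᵢ - ȳ) = 0`, hence
`∑ |f*ᵢ - ȳ| = 2 ∑_{f*ᵢ > ȳ} (f*ᵢ - ȳ)`. The set `{f* > ȳ}` is a union of blocks, so on it `f*`
may be replaced by `y ∘ π`; by monotonicity it is a final segment of indices, whose complement is
empty or an initial segment `{1, …, m}`. Hence the sum is `-∑_{i ≤ m} (y_{π(i)} - ȳ)`, at most the
maximal partial sum.
-/

open Finset

theorem eq_Iic_max'_of_isLowerSet {α : Type*} [LinearOrder α] [LocallyFiniteOrderBot α]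
    {s : Finset α} (hs : IsLowerSet (s : Set α)) (hne : s.Nonempty) : s = Iic (s.max' hne) := by
  ext i
  rw [mem_Iic]
  exact ⟨s.le_max' i, fun hi => hs hi (s.max'_mem hne)⟩

theorem sum_sub_mean_eq_zero {ι : Type*} [Fintype ι] (x : ι → ℝ) :
    ∑ i, (x i - (1 / (Fintype.card ι : ℝ)) * ∑ j, x j) = 0 := by
  rcases isEmpty_or_nonempty ι with hι | hι
  · exact Fintype.sum_empty _
  · rw [sum_sub_distrib, sum_const, card_univ, nsmul_eq_mul]
    field_simp
    ring

theorem sum_abs_eq_two_mul_sum_filter_pos {ι : Type*} [Fintype ι] {g : ι → ℝ}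
    (hg : ∑ i, g i = 0) : ∑ i, |g i| = 2 * ∑ i with 0 < g i, g i := by
  have habs : ∀ i, |g i| = 2 * (if 0 < g i then g i else 0) - g i := by
    intro i
    split_ifs with h
    · rw [abs_of_pos h]; ring
    · rw [abs_of_nonpos (not_lt.mp h)]; ring
  simp only [habs, sum_sub_distrib, ← mul_sum, ← sum_filter, hg, sub_zero]

theorem sum_filter_comp_eq_zero_of_sum_fiber_eq_zero {ι β : Type*} [Fintype ι]
    [DecidableEq β] {f : ι → β} {r : ι → ℝ}
    (hf : ∀ i, ∑ j with f j = f i, r j = 0) (p : β → Prop) [DecidablePred p] :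
    ∑ j with p (f j), r j = 0 := by
  rw [sum_filter, ← sum_fiberwise_of_maps_to fun j _ => mem_image_of_mem f (mem_univ j)]
  refine sum_eq_zero fun v hv => ?_
  obtain ⟨i, -, rfl⟩ := mem_image.mp hv
  rw [sum_congr rfl fun j hj => by rw [(mem_filter.mp hj).2]]
  split_ifs
  · exact hf i
  · exact sum_const_zero

theorem sum_le_sup'_abs_sum_Iic {α : Type*} [Fintype α] [LinearOrder α]
    [LocallyFiniteOrderBot α] {g : α → ℝ} (hg : ∑ i, g i = 0) {s : Finset α}
    (hs : IsUpperSet (s : Set α)) (hne : (univ : Finset α).Nonempty) :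
    ∑ i ∈ s, g i ≤ univ.sup' hne fun m => |∑ i ∈ Iic m, g i| := by
  have hsum : ∑ i ∈ s, g i = -∑ i ∈ sᶜ, g i := by
    linarith [sum_add_sum_compl s g]
  rw [hsum]
  rcases sᶜ.eq_empty_or_nonempty with hempty | hcompl
  · rw [hempty, sum_empty, neg_zero]
    obtain ⟨m, hm⟩ := hne
    exact (abs_nonneg _).trans (le_sup' (fun m => |∑ i ∈ Iic m, g i|) hm)
  · have hlower : IsLowerSet ((sᶜ : Finset α) : Set α) := by
      rw [coe_compl]; exact hs.compl
    rw [eq_Iic_max'_of_isLowerSet hlower hcompl]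
    exact (neg_le_abs _).trans (le_sup' (fun m => |∑ i ∈ Iic m, g i|) (mem_univ _))

/-- Zero-fit threshold bound. Let `π` order the covariate
increasingly, `z = y ∘ π`, `ȳ` the mean of `y`, and `fs` the isotonic
regression of `z` (with the regressogram property). Then
`(1/2) ∑ |fsᵢ - ȳ| ≤ max_{1 ≤ m ≤ n} |∑_{i ≤ m} (zᵢ - ȳ)|`; hence if
`λ` is at least this maximal partial sum, then `2λ ≥ ∑ |fsᵢ - ȳ|`. -/
theorem zero_fit_threshold_bound (n : ℕ) (hn : 1 ≤ n)
    (y : Fin n → ℝ) (π : Equiv.Perm (Fin n)) (fs : Fin n → ℝ)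
    (hmono : Monotone fs)
    (hreg : ∀ i : Fin n,
      ∑ j ∈ Finset.univ.filter (fun j => fs j = fs i), (y (π j) - fs j) = 0) :
    let ybar : ℝ := (1 / (n : ℝ)) * ∑ i, y i
    let M : ℝ := Finset.univ.sup'
      (Finset.univ_nonempty_iff.mpr (Fin.pos_iff_nonempty.mp (by omega)))
      (fun m : Fin n => |∑ i ∈ Finset.Iic m, (y (π i) - ybar)|)
    (1 / 2) * ∑ i, |fs i - ybar| ≤ M ∧
    ∀ lam : ℝ, M ≤ lam → ∑ i, |fs i - ybar| ≤ 2 * lam := by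
  intro ybar M
  have hy : ∑ i, (y (π i) - ybar) = 0 := by
    rw [Equiv.sum_comp π fun i => y i - ybar]
    simpa only [Fintype.card_fin] using sum_sub_mean_eq_zero y
  have hshift (p : ℝ → Prop) [DecidablePred p] :
      ∑ i with p (fs i), (fs i - ybar) = ∑ i with p (fs i), (y (π i) - ybar) := by
    have hres := sum_filter_comp_eq_zero_of_sum_fiber_eq_zero hreg p
    rw [← sub_eq_zero, ← sum_sub_distrib, ← neg_eq_zero, ← sum_neg_distrib, ← hres]
    exact sum_congr rfl fun i _ => by ring
  have hfs : ∑ i, (fs i - ybar) = 0 := by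
    simpa [hy] using hshift fun _ => True
  have hupper : IsUpperSet (({i | 0 < fs i - ybar} : Finset (Fin n)) : Set (Fin n)) :=
    fun i j hij hi => by
      simp only [coe_filter, mem_univ, true_and, Set.mem_ofPred_eq] at hi ⊢
      linarith [hmono hij]
  have hkey : ∑ i, |fs i - ybar| ≤ 2 * M := by
    rw [sum_abs_eq_two_mul_sum_filter_pos hfs, hshift fun v => 0 < v - ybar]
    gcongr
    exact sum_le_sup'_abs_sum_Iic hy hupper _
  exact ⟨by linarith, fun lam hlam => by linarith⟩
end
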